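/- For each KPP reaction function f, the propagation speed function v* : (0,1) → ℝ⁺ is strictly monotone decreasing: if 0 < a < b < 1 then v*(a) > v*(b). -/

import Mathlib

open Real Filter Topology

/-- A KPP reaction function: `f ∈ C¹`, `f 0 = f 1 = 0`, `f' 0 = 1`, `f' 1 < 0`,
`0 < f u ≤ u` on `(0,1)` and `f u < 0` for `u > 1`. -/
def IsKPP (f : ℝ → ℝ) : Prop :=
  ContDiff ℝ 1 f ∧ f 0 = 0 ∧ f 1 = 0 ∧ deriv f 0 = 1 ∧ deriv f 1 < 0 ∧
  (∀ u : ℝ, 0 < u → u < 1 → 0 < f u ∧ f u ≤ u) ∧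
  (∀ u : ℝ, 1 < u → f u < 0)

/-- The cut-off reaction function: `f_c u = f u` for `u > u_c`, and `0` for `u ≤ u_c`. -/
noncomputable def cutoff (f : ℝ → ℝ) (uc : ℝ) : ℝ → ℝ :=
  fun u => if uc < u then f u else 0

/-- A permanent form travelling wave solution with cut-off `uc` and speed `v`. -/
def IsPTW (f : ℝ → ℝ) (uc v : ℝ) (U : ℝ → ℝ) : Prop :=
  ContDiff ℝ 1 U ∧
  (∀ y : ℝ, y ≠ 0 → ContDiffAt ℝ 2 U y) ∧
  (∀ y : ℝ, y ≠ 0 → deriv (deriv U) y + v * deriv U y + cutoff f uc (U y) = 0) ∧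
  U 0 = uc ∧
  (∀ y : ℝ, y < 0 → uc ≤ U y ∧ U y ≤ 1) ∧
  (∀ y : ℝ, 0 < y → 0 ≤ U y ∧ U y ≤ uc) ∧
  Tendsto U atBot (𝓝 1) ∧
  Tendsto U atTop (𝓝 0)

/-!
For `y > 0` the wave lies below the cut-off, so `U'' + v U' = 0` there; boundedness and
`U → 0` force `v > 0` and `U'(0) = -v c`. For `y < 0` the quantity `U' e^{v y}` is
nonincreasing, so a slope `U'(y) ≥ 0` would make `U` nondecreasing on `(-∞, y]` and hence
`U(y) = 1`; uniqueness for the Lipschitz system satisfied by `(U, U')` rules this out. Hence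
`U' < 0` on `(-∞, 0]`, and since `-U' - v U` has derivative `f(U) > 0` there, `-U' < v U`.

Now let `a < b`, with waves `Ua`, `Ub`, and suppose `v(a) ≤ v(b)`. Compare slopes at equal
heights: with `Ua ∘ α = Ub` on `(-∞, 0]`, the reaction terms cancel in the derivative of
`h = Ub'² - (Ua' ∘ α)²`, leaving `h' ≤ -v(a) h`; and `h(0) > 0`, since at height `b` we have
`-Ua' < v(a) b ≤ v(b) b = -Ub'(0)`. So `h` grows like `e^{-v(a) y}` as `y → -∞`, while
`0 < -Ub' < v(b)` keeps it bounded.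
-/

open Set Function

lemma cutoff_of_lt {f : ℝ → ℝ} {c u : ℝ} (h : c < u) : cutoff f c u = f u := if_pos h

lemma cutoff_of_le {f : ℝ → ℝ} {c u : ℝ} (h : u ≤ c) : cutoff f c u = 0 := if_neg h.not_gt

lemma IsKPP.cutoff_nonneg {f : ℝ → ℝ} (hf : IsKPP f) {c u : ℝ} (hc : 0 ≤ c) (hu : u ≤ 1) :
    0 ≤ cutoff f c u := by
  have ⟨_, _, hf1, _, _, hpos, _⟩ := hf
  unfold cutoff
  split_ifs with h
  · rcases hu.lt_or_eq with hu | rfl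
    · exact (hpos u (hc.trans_lt h) hu).1.le
    · exact hf1.ge
  · exact le_rfl

lemma IsKPP.exists_abs_cutoff_le {f : ℝ → ℝ} (hf : IsKPP f) :
    ∃ K : ℝ, 0 ≤ K ∧ ∀ c, ∀ u ∈ Icc (0 : ℝ) 1, |cutoff f c u| ≤ K * |1 - u| := by
  have ⟨hC1, _, hf1, _⟩ := hf
  obtain ⟨K, hK⟩ := hC1.contDiffOn.exists_lipschitzOnWith one_ne_zero (convex_Icc 0 1)
    isCompact_Icc
  refine ⟨K, K.2, fun c u hu => ?_⟩
  have hfu : |f u| ≤ K * |1 - u| := by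
    simpa [Real.dist_eq, hf1, abs_sub_comm] using
      hK.dist_le_mul u hu 1 (right_mem_Icc.2 zero_le_one)
  unfold cutoff
  split_ifs
  · exact hfu
  · simpa using hfu.trans' (abs_nonneg _)

lemma eq_of_hasDerivAt_eq_zero {F : ℝ → ℝ} {x y : ℝ} (hxy : x ≤ y)
    (hF : ContinuousOn F (Icc x y)) (hF' : ∀ t ∈ Ioo x y, HasDerivAt F 0 t) : F y = F x := by
  rcases hxy.eq_or_lt with rfl | hxy
  · rfl
  obtain ⟨t, -, h⟩ := exists_hasDerivAt_eq_slope F (fun _ => 0) hxy hF hF'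
  rw [eq_comm, div_eq_zero_iff, sub_eq_zero] at h
  exact h.resolve_right (sub_ne_zero.2 hxy.ne')

theorem HasStrictDerivAt.hasDerivAt_invFunOn {𝕜 : Type*} [NontriviallyNormedField 𝕜]
    [CompleteSpace 𝕜] {g : 𝕜 → 𝕜} {g' x : 𝕜} {s : Set 𝕜} (hg : HasStrictDerivAt g g' x)
    (hg' : g' ≠ 0) (hs : s ∈ 𝓝 x) (hinj : InjOn g s) :
    HasDerivAt (invFunOn g s) g'⁻¹ (g x) :=
  (hg.to_local_left_inverse hg' <|
    mem_of_superset hs fun _ hy => hinj.leftInvOn_invFunOn hy).hasDerivAt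

lemma nonpos_of_deriv_le_neg_mul {h h' : ℝ → ℝ} {μ M : ℝ} (hμ : 0 < μ)
    (hc : ContinuousOn h (Iic 0)) (hd : ∀ t < 0, HasDerivAt h (h' t) t)
    (hle : ∀ t < 0, h' t ≤ -(μ * h t)) (hM : ∀ t < 0, h t ≤ M) : h 0 ≤ 0 := by
  have hd' : ∀ t < 0, HasDerivAt (fun t => h t * exp (μ * t))
      (h' t * exp (μ * t) + h t * (exp (μ * t) * μ)) t := fun t ht =>
    (hd t ht).mul (((hasDerivAt_id t).const_mul μ).exp.congr_deriv (by simp))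
  have hanti : AntitoneOn (fun t => h t * exp (μ * t)) (Iic 0) := by
    refine antitoneOn_of_deriv_nonpos (convex_Iic 0) (hc.mul (by fun_prop))
      (fun t ht => ?_) fun t ht => ?_ <;> rw [interior_Iic] at ht
    · exact (hd' t ht).differentiableAt.differentiableWithinAt
    · rw [(hd' t ht).deriv]
      nlinarith [exp_pos (μ * t), hle t ht]
  have hlim : Tendsto (fun t => M * exp (μ * t)) atBot (𝓝 0) := by
    simpa using (tendsto_exp_atBot.comp (tendsto_id.const_mul_atBot hμ)).const_mul M
  refine ge_of_tendsto hlim ?_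
  filter_upwards [eventually_lt_atBot 0] with t ht
  calc h 0 = h 0 * exp (μ * 0) := by simp
    _ ≤ h t * exp (μ * t) := hanti ht.le self_mem_Iic ht.le
    _ ≤ M * exp (μ * t) := by gcongr; exact hM t ht

namespace IsPTW

variable {f : ℝ → ℝ} {c v : ℝ} {U : ℝ → ℝ} {y : ℝ}

lemma hasDerivAt (hU : IsPTW f c v U) (y : ℝ) : HasDerivAt U (deriv U y) y :=
  (hU.1.differentiable one_ne_zero y).hasDerivAt

lemma hasDerivAt_deriv (hU : IsPTW f c v U) (hy : y ≠ 0) :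
    HasDerivAt (deriv U) (-(v * deriv U y) - cutoff f c (U y)) y := by
  have ⟨_, hC2, hode, _⟩ := hU
  have h := (((hC2 y hy).derivWithin (m := 1) le_rfl).differentiableAt one_ne_zero).hasDerivAt
  rwa [show deriv (deriv U) y = -(v * deriv U y) - cutoff f c (U y) by linarith [hode y hy]] at h

lemma hasDerivAt_deriv_mul_exp (hU : IsPTW f c v U) (hy : y ≠ 0) :
    HasDerivAt (fun t => deriv U t * exp (v * t)) (-(cutoff f c (U y) * exp (v * y))) y :=
  ((hU.hasDerivAt_deriv hy).mul ((hasDerivAt_id y).const_mul v).exp).congr_deriv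
    (by simp only [id]; ring)

lemma deriv_eq_mul_exp (hU : IsPTW f c v U) (hy : 0 ≤ y) :
    deriv U y = deriv U 0 * exp (-(v * y)) := by
  have ⟨hC1, _, _, _, _, hpos, _⟩ := hU
  have h := eq_of_hasDerivAt_eq_zero (F := fun t => deriv U t * exp (v * t)) hy
    (Continuous.continuousOn (by fun_prop)) fun t ht => by
    simpa [cutoff_of_le (hpos t ht.1).2] using hU.hasDerivAt_deriv_mul_exp ht.1.ne'
  simp only [mul_zero, exp_zero, mul_one] at h
  rw [exp_neg, ← h]
  field_simp

lemma deriv_zero_neg (hU : IsPTW f c v U) (hc : 0 < c) : deriv U 0 < 0 := by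
  have ⟨hC1, _, _, hU0, _, _, _, htop⟩ := hU
  by_contra! h
  have hmono : MonotoneOn U (Ici 0) := by
    refine monotoneOn_of_deriv_nonneg (convex_Ici 0) hC1.continuous.continuousOn
      (fun t _ => (hU.hasDerivAt t).differentiableAt.differentiableWithinAt) fun t ht => ?_
    rw [interior_Ici] at ht
    rw [hU.deriv_eq_mul_exp ht.le]
    positivity
  have : c ≤ 0 := by
    refine ge_of_tendsto htop ?_
    filter_upwards [eventually_ge_atTop 0] with t ht
    exact hU0 ▸ hmono self_mem_Ici ht ht
  linarith

lemma speed_pos (hU : IsPTW f c v U) (hc : 0 < c) (hv : 0 ≤ v) : 0 < v := by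
  have ⟨hC1, _, _, hU0, _, hpos, _⟩ := hU
  refine hv.lt_of_ne fun hv0 => ?_
  subst hv0
  have hw := hU.deriv_zero_neg hc
  -- with `v = 0`, `U` is affine on `[0, ∞)` and would reach `-c` at this point
  set y := 2 * c / -deriv U 0
  have hy : 0 < y := div_pos (by positivity) (neg_pos.2 hw)
  obtain ⟨t, ht, h⟩ := exists_hasDerivAt_eq_slope U (deriv U) hy hC1.continuous.continuousOn
    fun t _ => hU.hasDerivAt t
  simp only [hU.deriv_eq_mul_exp ht.1.le, hU0, zero_mul, neg_zero, exp_zero, mul_one,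
    sub_zero] at h
  rw [eq_div_iff hy.ne'] at h
  have : deriv U 0 * y = -(2 * c) := by simp only [y]; field_simp [hw.ne]
  linarith [(hpos y hy).1]

lemma deriv_zero (hU : IsPTW f c v U) (hc : 0 < c) (hv : 0 ≤ v) : deriv U 0 = -(v * c) := by
  have ⟨hC1, _, _, hU0, _, hpos, _, htop⟩ := hU
  have hv := hU.speed_pos hc hv
  have hconst : ∀ y, 0 ≤ y → deriv U y + v * U y = deriv U 0 + v * c := fun y hy => by
    rw [← hU0]
    refine eq_of_hasDerivAt_eq_zero (F := fun t => deriv U t + v * U t) hy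
      (Continuous.continuousOn (by fun_prop)) fun t ht => ?_
    have h := (hU.hasDerivAt_deriv ht.1.ne').add ((hU.hasDerivAt t).const_mul v)
    rw [cutoff_of_le (hpos t ht.1).2] at h
    exact h.congr_deriv (by ring)
  have hlim : Tendsto (fun y => deriv U y + v * U y) atTop (𝓝 0) := by
    have hexp : Tendsto (fun y => deriv U 0 * exp (-(v * y))) atTop (𝓝 0) := by
      simpa using (tendsto_exp_neg_atTop_nhds_zero.comp
        (tendsto_id.const_mul_atTop hv)).const_mul (deriv U 0)
    have hderiv : Tendsto (deriv U) atTop (𝓝 0) := hexp.congr' <| by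
      filter_upwards [eventually_ge_atTop 0] with y hy
      exact (hU.deriv_eq_mul_exp hy).symm
    simpa using hderiv.add (htop.const_mul v)
  have := tendsto_nhds_unique (tendsto_const_nhds.congr' <|
    (eventually_ge_atTop 0).mono fun y hy => (hconst y hy).symm) hlim
  linarith

lemma antitoneOn_deriv_mul_exp (hU : IsPTW f c v U) (hf : IsKPP f) (hc : 0 ≤ c) :
    AntitoneOn (fun t => deriv U t * exp (v * t)) (Iic 0) := by
  have ⟨hC1, _, _, _, hneg, _⟩ := hU
  refine antitoneOn_of_deriv_nonpos (convex_Iic 0) (Continuous.continuousOn (by fun_prop))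
    (fun t ht => ?_) fun t ht => ?_ <;> rw [interior_Iic] at ht
  · exact (hU.hasDerivAt_deriv_mul_exp ht.ne).differentiableAt.differentiableWithinAt
  · rw [(hU.hasDerivAt_deriv_mul_exp ht.ne).deriv, neg_nonpos]
    exact mul_nonneg (hf.cutoff_nonneg hc (hneg t ht).2) (exp_pos _).le

/-- Grönwall's inequality for `(1 - U, U')`, which vanishes at `y` and solves a Lipschitz
system on `[y, 0)`, would give `U 0 = 1`. -/
lemma ne_one (hU : IsPTW f c v U) (hf : IsKPP f) (hc0 : 0 ≤ c) (hc1 : c < 1) (hy : y < 0) :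
    U y ≠ 1 := by
  have ⟨hC1, _, _, hU0, hneg, _⟩ := hU
  intro hUy
  obtain ⟨K, hK0, hK⟩ := hf.exists_abs_cutoff_le
  have hW : deriv U y = 0 := IsLocalMax.deriv_eq_zero <|
    mem_of_superset (Iio_mem_nhds hy) fun t ht => hUy ▸ (hneg t ht).2
  have hE := eq_zero_of_abs_deriv_le_mul_abs_self_of_eq_zero_right (K := 1 + |v| + K)
    (f := fun t => (1 - U t, deriv U t))
    (f' := fun t => (-deriv U t, -(v * deriv U t) - cutoff f c (U t)))
    (Continuous.continuousOn (by fun_prop))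
    (fun t ht => (((hU.hasDerivAt t).const_sub 1).prodMk
      (hU.hasDerivAt_deriv ht.2.ne)).hasDerivWithinAt)
    (by simp [hUy, hW]) (fun t ht => ?_) 0 ⟨hy.le, le_rfl⟩
  · simp only [Prod.mk_eq_zero, sub_eq_zero, hU0] at hE
    exact hc1.ne' hE.1
  · have hcut := hK c (U t) ⟨hc0.trans (hneg t ht.2).1, (hneg t ht.2).2⟩
    simp only [Prod.norm_mk, Real.norm_eq_abs, abs_neg]
    set m := max |1 - U t| |deriv U t|
    have hUm : |1 - U t| ≤ m := le_max_left _ _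
    have hWm : |deriv U t| ≤ m := le_max_right _ _
    have hrhs : |-(v * deriv U t) - cutoff f c (U t)| ≤ (|v| + K) * m :=
      calc _ ≤ |v| * |deriv U t| + |cutoff f c (U t)| := by
            rw [← abs_mul, ← abs_neg (v * _)]; exact abs_sub _ _
        _ ≤ (|v| + K) * m := by nlinarith [abs_nonneg v]
    refine max_le (hWm.trans ?_) (hrhs.trans ?_) <;>
      nlinarith [abs_nonneg v, hWm.trans' (abs_nonneg _)]

lemma deriv_neg (hU : IsPTW f c v U) (hf : IsKPP f) (hc0 : 0 < c) (hc1 : c < 1) (hv : 0 ≤ v)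
    (hy : y ≤ 0) : deriv U y < 0 := by
  have ⟨hC1, _, _, _, hneg, _, hbot, _⟩ := hU
  rcases hy.lt_or_eq with hy | rfl
  · by_contra! hW
    apply hU.ne_one hf hc0.le hc1 hy
    have hmono : MonotoneOn U (Iic y) := by
      refine monotoneOn_of_deriv_nonneg (convex_Iic y) hC1.continuous.continuousOn
        (fun t _ => (hU.hasDerivAt t).differentiableAt.differentiableWithinAt) fun t ht => ?_
      rw [interior_Iic] at ht
      have := hU.antitoneOn_deriv_mul_exp hf hc0.le (ht.le.trans hy.le) hy.le ht.le
      exact nonneg_of_mul_nonneg_left ((mul_nonneg hW (exp_pos _).le).trans this) (exp_pos _)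
    refine le_antisymm (hneg y hy).2 (le_of_tendsto hbot ?_)
    filter_upwards [eventually_le_atBot y] with t ht
    exact hmono ht self_mem_Iic ht
  · rw [hU.deriv_zero hc0 hv]
    nlinarith [hU.speed_pos hc0 hv]

lemma strictAntiOn (hU : IsPTW f c v U) (hf : IsKPP f) (hc0 : 0 < c) (hc1 : c < 1)
    (hv : 0 ≤ v) : StrictAntiOn U (Iic 0) :=
  strictAntiOn_of_deriv_neg (convex_Iic 0) hU.1.continuous.continuousOn fun _ ht =>
    hU.deriv_neg hf hc0 hc1 hv (interior_subset (s := Iic 0) ht)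

lemma mem_Ioo (hU : IsPTW f c v U) (hf : IsKPP f) (hc0 : 0 < c) (hc1 : c < 1) (hv : 0 ≤ v)
    (hy : y < 0) : U y ∈ Ioo c 1 := by
  have ⟨_, _, _, hU0, hneg, _⟩ := hU
  exact ⟨hU0 ▸ hU.strictAntiOn hf hc0 hc1 hv hy.le self_mem_Iic hy,
    (hneg y hy).2.lt_of_ne (hU.ne_one hf hc0.le hc1 hy)⟩

lemma mapsTo_Ico (hU : IsPTW f c v U) (hf : IsKPP f) (hc0 : 0 < c) (hc1 : c < 1)
    (hv : 0 ≤ v) : MapsTo U (Iic 0) (Ico c 1) := fun y hy => by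
  rcases (mem_Iic.1 hy).lt_or_eq with hy | rfl
  · exact Ioo_subset_Ico_self (hU.mem_Ioo hf hc0 hc1 hv hy)
  · have ⟨_, _, _, hU0, _⟩ := hU
    rw [hU0]
    exact ⟨le_rfl, hc1⟩

lemma neg_deriv_lt (hU : IsPTW f c v U) (hf : IsKPP f) (hc0 : 0 < c) (hc1 : c < 1)
    (hv : 0 ≤ v) (hy : y < 0) : -deriv U y < v * U y := by
  have ⟨hC1, _, _, hU0, _⟩ := hU
  have ⟨_, _, _, _, _, hfpos, _⟩ := hf
  have hmono : StrictMonoOn (fun t => -deriv U t - v * U t) (Iic 0) := by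
    refine strictMonoOn_of_deriv_pos (convex_Iic 0) (Continuous.continuousOn (by fun_prop))
      fun t ht => ?_
    rw [interior_Iic] at ht
    obtain ⟨hct, ht1⟩ := hU.mem_Ioo hf hc0 hc1 hv ht
    have hd : HasDerivAt (fun t => -deriv U t - v * U t) _ t :=
      (hU.hasDerivAt_deriv ht.ne).neg.sub ((hU.hasDerivAt t).const_mul v)
    rw [hd.deriv, cutoff_of_lt hct]
    linarith [(hfpos _ (hc0.trans hct) ht1).1]
  have := hmono hy.le self_mem_Iic hy
  simp only [hU.deriv_zero hc0 hv, hU0] at this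
  linarith

lemma sq_deriv_lt (hU : IsPTW f c v U) (hf : IsKPP f) (hc0 : 0 < c) (hc1 : c < 1)
    (hv : 0 ≤ v) (hy : y < 0) : deriv U y ^ 2 < v ^ 2 := by
  have := hU.neg_deriv_lt hf hc0 hc1 hv hy
  have := hU.deriv_neg hf hc0 hc1 hv hy.le
  have := mul_le_of_le_one_right hv (hU.mem_Ioo hf hc0 hc1 hv hy).2.le
  nlinarith

lemma surjOn_Ioo (hU : IsPTW f c v U) : SurjOn U (Iio 0) (Ioo c 1) := by
  have ⟨hC1, _, _, hU0, _, _, hbot, _⟩ := hU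
  intro u hu
  obtain ⟨y, hyu, hy⟩ := ((hbot.eventually (lt_mem_nhds hu.2)).and (eventually_lt_atBot 0)).exists
  obtain ⟨x, hx, rfl⟩ := intermediate_value_Ioo' hy.le hC1.continuous.continuousOn
    ⟨hU0.symm ▸ hu.1, hyu⟩
  exact ⟨x, hx.2, rfl⟩

lemma exists_comp_eq (hU : IsPTW f c v U) (hf : IsKPP f) (hc0 : 0 < c) (hc1 : c < 1)
    (hv : 0 ≤ v) {g : ℝ → ℝ} {s : Set ℝ} (hg : Differentiable ℝ g)
    (hgs : MapsTo g s (Ioo c 1)) :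
    ∃ α : ℝ → ℝ, ∀ y ∈ s, α y < 0 ∧ U (α y) = g y ∧ deriv U (α y) < 0 ∧
      HasDerivAt α (deriv g y / deriv U (α y)) y := by
  refine ⟨invFunOn U (Iio 0) ∘ g, fun y hy => ?_⟩
  have hαy : invFunOn U (Iio 0) (g y) < 0 := hU.surjOn_Ioo.mapsTo_invFunOn (hgs hy)
  have hUα : U (invFunOn U (Iio 0) (g y)) = g y := hU.surjOn_Ioo.rightInvOn_invFunOn (hgs hy)
  have hW := hU.deriv_neg hf hc0 hc1 hv hαy.le
  have hinv := (hU.1.contDiffAt.hasStrictDerivAt one_ne_zero).hasDerivAt_invFunOn hW.ne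
    (Iio_mem_nhds hαy) ((hU.strictAntiOn hf hc0 hc1 hv).injOn.mono Iio_subset_Iic_self)
  rw [hUα] at hinv
  exact ⟨hαy, hUα, hW, (hinv.comp y (hg y).hasDerivAt).congr_deriv (div_eq_inv_mul _ _).symm⟩

end IsPTW

section Comparison

variable {f : ℝ → ℝ} {a b va vb : ℝ} {Ua Ub α : ℝ → ℝ} {y : ℝ}

lemma hasDerivAt_sq_deriv_sub_sq_deriv_comp (hUa : IsPTW f a va Ua) (hUb : IsPTW f b vb Ub)
    (hy : y ≠ 0) (hαy : α y ≠ 0) (hUα : Ua (α y) = Ub y) (ha : a < Ub y) (hb : b < Ub y)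
    (hWa : deriv Ua (α y) ≠ 0) (hα : HasDerivAt α (deriv Ub y / deriv Ua (α y)) y) :
    HasDerivAt (fun t => deriv Ub t ^ 2 - deriv Ua (α t) ^ 2)
      (2 * va * deriv Ua (α y) * deriv Ub y - 2 * vb * deriv Ub y ^ 2) y := by
  have hb' := (hUb.hasDerivAt_deriv hy).pow 2
  have ha' := ((hUa.hasDerivAt_deriv hαy).comp y hα).pow 2
  rw [cutoff_of_lt hb] at hb'
  rw [hUα, cutoff_of_lt ha] at ha'
  refine (hb'.sub ha').congr_deriv ?_
  simp only [comp_apply]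
  field_simp
  ring

theorem IsPTW.speed_lt_speed_of_lt (hUa : IsPTW f a va Ua) (hUb : IsPTW f b vb Ub)
    (hf : IsKPP f) (ha : 0 < a) (hab : a < b) (hb : b < 1) (hva : 0 ≤ va) (hvb : 0 ≤ vb) :
    vb < va := by
  by_contra! hv
  have hb0 : 0 < b := ha.trans hab
  have ⟨hUb1, _, _, hUb0, _⟩ := hUb
  obtain ⟨α, hα⟩ := hUa.exists_comp_eq hf ha (hab.trans hb) hva
    (hUb1.differentiable one_ne_zero)
    ((hUb.mapsTo_Ico hf hb0 hb hvb).mono_right (Ico_subset_Ioo_left hab))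
  set h := fun t => deriv Ub t ^ 2 - deriv Ua (α t) ^ 2
  have hcont : ContinuousOn h (Iic 0) :=
    (hUb1.continuous_deriv_one.pow 2).continuousOn.sub <|
      (hUa.1.continuous_deriv_one.comp_continuousOn
        fun y hy => (hα y hy).2.2.2.continuousAt.continuousWithinAt).pow 2
  have hderiv : ∀ t < 0, HasDerivAt h
      (2 * va * deriv Ua (α t) * deriv Ub t - 2 * vb * deriv Ub t ^ 2) t := fun t ht => by
    obtain ⟨hαt, hUα, hW, hα'⟩ := hα t ht.le
    have hbt := (hUb.mem_Ioo hf hb0 hb hvb ht).1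
    exact hasDerivAt_sq_deriv_sub_sq_deriv_comp hUa hUb ht.ne hαt.ne hUα (hab.trans hbt) hbt
      hW.ne hα'
  have hgrowth : ∀ t < 0,
      2 * va * deriv Ua (α t) * deriv Ub t - 2 * vb * deriv Ub t ^ 2 ≤ -(va * h t) :=
    fun t _ => by
      nlinarith [mul_nonneg hva (sq_nonneg (deriv Ub t - deriv Ua (α t))),
        mul_nonneg (sub_nonneg.2 hv) (sq_nonneg (deriv Ub t))]
  have hbound : ∀ t < 0, h t ≤ vb ^ 2 := fun t ht => by
    linarith [hUb.sq_deriv_lt hf hb0 hb hvb ht, sq_nonneg (deriv Ua (α t))]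
  have hpos : 0 < h 0 := by
    obtain ⟨hα0, hUα, hW, -⟩ := hα 0 self_mem_Iic
    have hslope_a := hUa.neg_deriv_lt hf ha (hab.trans hb) hva hα0
    rw [hUα, hUb0] at hslope_a
    have hslope_b : deriv Ub 0 = -(vb * b) := hUb.deriv_zero hb0 hvb
    nlinarith [mul_le_mul_of_nonneg_right hv hb0.le]
  exact hpos.not_ge <|
    nonpos_of_deriv_le_neg_mul (hUa.speed_pos ha hva) hcont hderiv hgrowth hbound

end Comparison

/-- The propagation speed function is strictly monotone decreasing on `(0,1)`. -/
theorem vstar_strictAnti (f : ℝ → ℝ) (hf : IsKPP f) (vstar : ℝ → ℝ)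
    (hvstar : ∀ uc ∈ Set.Ioo (0:ℝ) 1, 0 ≤ vstar uc ∧ ∃ U : ℝ → ℝ, IsPTW f uc (vstar uc) U)
    (a b : ℝ) (ha : 0 < a) (hab : a < b) (hb : b < 1) : vstar b < vstar a := by
  obtain ⟨hva, Ua, hUa⟩ := hvstar a ⟨ha, hab.trans hb⟩
  obtain ⟨hvb, Ub, hUb⟩ := hvstar b ⟨ha.trans hab, hb⟩
  exact hUa.speed_lt_speed_of_lt hUb hf ha hab hb hva hvb
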